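/- arXiv:2506.07100 — 4 statements merged into one kernel-verified Lean document; each statement's English description precedes it below -/
import Mathlib

section
/- Let N > 1, r > 0, p ∈ (1, ∞), and let f ∈ L^q([0, r), m_N) with q the conjugate exponent of p. Define g(x) = (1/h_N(x)) ∫_0^x f dm_N where h_N(x) = N ω_N x^{N-1}. Then for any ψ ∈ C_c^1([0, r)), ∫_0^r g(x) ψ'(x) h_N(x) dx = −∫_0^r f ψ h_N dx. -/
/-!
Against `m_N` the integral of `f` is the Lebesgue integral of `c = f h_N`, so the factor `h_N`
cancels and the left side is `∫_0^r (∫_0^x c) ψ'(x) dx`. Since `f ∈ L^q(m_N)` and `m_N` is finite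
on `[0, r)`, `c` is Lebesgue integrable there; Fubini on the triangle `t ≤ x < r` turns the left
side into `∫_0^r c(t) (ψ(r) - ψ(t)) dt`, and `ψ(r) = 0` because `tsupport ψ ⊆ (-∞, r)`.
-/

open MeasureTheory Set ENNReal

/-- `ω_N = π^{N/2} / Γ(N/2 + 1)`. -/
noncomputable def omegaN (N : ℝ) : ℝ := Real.pi ^ (N / 2) / Real.Gamma (N / 2 + 1)

/-- Density `h_N(t) = N ω_N t^{N-1}`. -/
noncomputable def hdens (N : ℝ) (t : ℝ) : ℝ := N * omegaN N * t ^ (N - 1)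

/-- The weighted model measure `m_N = h_N 𝓛¹` on `[0, ∞)`. -/
noncomputable def modelMeasure (N : ℝ) : Measure ℝ :=
  (volume.restrict (Set.Ici (0 : ℝ))).withDensity fun t => ENNReal.ofReal (hdens N t)

lemma omegaN_pos {N : ℝ} (hN : 0 ≤ N) : 0 < omegaN N :=
  div_pos (Real.rpow_pos_of_pos Real.pi_pos _) (Real.Gamma_pos_of_pos (by linarith))

lemma hdens_nonneg {N t : ℝ} (hN : 0 ≤ N) (ht : 0 ≤ t) : 0 ≤ hdens N t :=
  mul_nonneg (mul_nonneg hN (omegaN_pos hN).le) (Real.rpow_nonneg ht _)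

lemma hdens_pos {N t : ℝ} (hN : 0 < N) (ht : 0 < t) : 0 < hdens N t :=
  mul_pos (mul_pos hN (omegaN_pos hN.le)) (Real.rpow_pos_of_pos ht _)

lemma measurable_hdens (N : ℝ) : Measurable (hdens N) := by
  unfold hdens
  fun_prop

lemma continuous_hdens {N : ℝ} (hN : 1 ≤ N) : Continuous (hdens N) :=
  continuous_const.mul (Real.continuous_rpow_const (by linarith))

lemma isLocallyFiniteMeasure_modelMeasure {N : ℝ} (hN : 1 ≤ N) :
    IsLocallyFiniteMeasure (modelMeasure N) :=
  .withDensity_ofReal (continuous_hdens hN)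

lemma modelMeasure_restrict (N : ℝ) {s : Set ℝ} (hs : MeasurableSet s) (hs0 : s ⊆ Ici 0) :
    (modelMeasure N).restrict s
      = (volume.restrict s).withDensity fun t => ENNReal.ofReal (hdens N t) := by
  rw [modelMeasure, restrict_withDensity hs, Measure.restrict_restrict hs, inter_eq_left.mpr hs0]

lemma setIntegral_modelMeasure {N : ℝ} (hN : 0 ≤ N) (g : ℝ → ℝ) {s : Set ℝ}
    (hs : MeasurableSet s) (hs0 : s ⊆ Ici 0) :
    ∫ t in s, g t ∂modelMeasure N = ∫ t in s, g t * hdens N t := by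
  rw [modelMeasure_restrict N hs hs0, integral_withDensity_eq_integral_toReal_smul
    (measurable_hdens N).ennreal_ofReal (ae_of_all _ fun _ => ofReal_lt_top)]
  refine setIntegral_congr_fun hs fun t ht => ?_
  rw [toReal_ofReal (hdens_nonneg hN (hs0 ht)), smul_eq_mul, mul_comm]

lemma integrableOn_mul_hdens {N : ℝ} (hN : 0 ≤ N) {g : ℝ → ℝ} {s : Set ℝ}
    (hs : MeasurableSet s) (hs0 : s ⊆ Ici 0) (hg : Integrable g ((modelMeasure N).restrict s)) :
    IntegrableOn (fun t => g t * hdens N t) s := by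
  rw [modelMeasure_restrict N hs hs0, integrable_withDensity_iff
    (measurable_hdens N).ennreal_ofReal (ae_of_all _ fun _ => ofReal_lt_top)] at hg
  refine IntegrableOn.congr_fun hg (fun t ht => ?_) hs
  rw [toReal_ofReal (hdens_nonneg hN (hs0 ht))]

lemma integrableOn_Ioc_mul_hdens {N q r : ℝ} {f : ℝ → ℝ} (hN : 1 ≤ N) (hq : 1 ≤ q)
    (hf : MemLp f (ENNReal.ofReal q) ((modelMeasure N).restrict (Ico 0 r))) :
    IntegrableOn (fun t => f t * hdens N t) (Ioc 0 r) := by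
  have := isLocallyFiniteMeasure_modelMeasure hN
  have : IsFiniteMeasure ((modelMeasure N).restrict (Ico 0 r)) :=
    isFiniteMeasure_restrict.mpr measure_Ico_lt_top.ne
  have hf₁ := hf.integrable (one_le_ofReal.mpr hq)
  exact ((integrableOn_Icc_iff_integrableOn_Ico).mpr (integrableOn_mul_hdens (by linarith)
    measurableSet_Ico Ico_subset_Ici_self hf₁)).mono_set Ioc_subset_Icc_self

theorem setIntegral_primitive_mul_deriv {a b : ℝ} {c ψ : ℝ → ℝ} (hc : IntegrableOn c (Ioc a b))
    (hψ : ContDiff ℝ 1 ψ) :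
    ∫ x in Ioc a b, (∫ t in Ioc a x, c t) * deriv ψ x = ∫ t in Ioc a b, c t * (ψ b - ψ t) := by
  have hψ' : Continuous (deriv ψ) := hψ.continuous_deriv le_rfl
  set F : ℝ × ℝ → ℝ := {q | q.2 ≤ q.1}.indicator fun q => c q.2 * deriv ψ q.1
  have hF : Integrable F ((volume.restrict (Ioc a b)).prod (volume.restrict (Ioc a b))) :=
    (hψ'.integrableOn_Ioc.mul_prod hc).indicator (measurableSet_le measurable_snd measurable_fst)
      |>.congr (ae_of_all _ fun q => by simp only [F, indicator_apply, mul_comm])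
  have h_integral_snd : ∀ x ∈ Ioc a b,
      (∫ t in Ioc a x, c t) * deriv ψ x = ∫ t in Ioc a b, F (x, t) := by
    intro x hx
    change _ = ∫ t in Ioc a b, (Iic x).indicator (fun t => c t * deriv ψ x) t
    rw [setIntegral_indicator measurableSet_Iic, Ioc_inter_Iic, inf_eq_right.mpr hx.2,
      integral_mul_const]
  have h_integral_fst : ∀ t ∈ Ioc a b, ∫ x in Ioc a b, F (x, t) = c t * (ψ b - ψ t) := by
    intro t ht
    change ∫ x in Ioc a b, (Ici t).indicator (fun x => c t * deriv ψ x) x = _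
    have hIcc : Ioc a b ∩ Ici t = Icc t b := by
      ext x
      simp only [mem_inter_iff, mem_Ioc, mem_Ici, mem_Icc]
      exact ⟨fun ⟨⟨_, hxb⟩, htx⟩ => ⟨htx, hxb⟩, fun ⟨htx, hxb⟩ => ⟨⟨ht.1.trans_le htx, hxb⟩, htx⟩⟩
    rw [setIntegral_indicator measurableSet_Ici, hIcc, integral_const_mul,
      integral_Icc_eq_integral_Ioc, ← intervalIntegral.integral_of_le ht.2,
      intervalIntegral.integral_deriv_eq_sub (fun x _ => hψ.differentiable one_ne_zero x)
        (hψ'.intervalIntegrable t b)]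
  calc ∫ x in Ioc a b, (∫ t in Ioc a x, c t) * deriv ψ x
      = ∫ x in Ioc a b, ∫ t in Ioc a b, F (x, t) :=
        setIntegral_congr_fun measurableSet_Ioc h_integral_snd
    _ = ∫ t in Ioc a b, ∫ x in Ioc a b, F (x, t) := integral_integral_swap hF
    _ = ∫ t in Ioc a b, c t * (ψ b - ψ t) :=
        setIntegral_congr_fun measurableSet_Ioc h_integral_fst

theorem stmt8_general (N p : ℝ) (hN1 : 1 < N) (hp : 1 < p) (r : ℝ)
    (f : ℝ → ℝ)
    (hf : MemLp f (ENNReal.ofReal (p / (p - 1))) ((modelMeasure N).restrict (Set.Ico 0 r)))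
    (ψ : ℝ → ℝ) (hψ : ContDiff ℝ 1 ψ)
    (hψsupp : tsupport ψ ⊆ Set.Iio r) :
    ∫ x in Set.Ioc (0 : ℝ) r,
        ((1 / hdens N x) * ∫ t in Set.Ioc (0 : ℝ) x, f t ∂(modelMeasure N)) * deriv ψ x
          * hdens N x
      = -∫ x in Set.Ioc (0 : ℝ) r, f x * ψ x * hdens N x := by
  have hN0 : 0 < N := by linarith
  have hq : 1 ≤ p / (p - 1) := by
    rw [le_div_iff₀ (by linarith)]
    linarith
  have hψr : ψ r = 0 := image_eq_zero_of_notMem_tsupport fun h => lt_irrefl r (hψsupp h)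
  calc _ = ∫ x in Ioc 0 r, (∫ t in Ioc 0 x, f t * hdens N t) * deriv ψ x := by
        refine setIntegral_congr_fun measurableSet_Ioc fun x hx => ?_
        rw [setIntegral_modelMeasure hN0.le f measurableSet_Ioc fun t ht => ht.1.le]
        field_simp [(hdens_pos hN0 hx.1).ne']
    _ = ∫ t in Ioc 0 r, f t * hdens N t * (ψ r - ψ t) :=
        setIntegral_primitive_mul_deriv (integrableOn_Ioc_mul_hdens hN1.le hq hf) hψ
    _ = _ := by
        rw [hψr, ← integral_neg]
        congr with t
        ring

/-- Fubini identity: with `g(x) = (1/h_N(x)) ∫_0^x f dm_N`, for any `ψ ∈ C_c^1([0, r))` one has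
`∫_0^r g ψ' h_N dx = -∫_0^r f ψ h_N dx`. -/
theorem stmt8 (N p : ℝ) (hN1 : 1 < N) (hp : 1 < p) (r : ℝ) (hr : 0 < r)
    (f : ℝ → ℝ)
    (hf : MemLp f (ENNReal.ofReal (p / (p - 1))) ((modelMeasure N).restrict (Set.Ico 0 r)))
    (ψ : ℝ → ℝ) (hψ : ContDiff ℝ 1 ψ) (hψc : HasCompactSupport ψ)
    (hψsupp : tsupport ψ ⊆ Set.Iio r) :
    ∫ x in Set.Ioc (0 : ℝ) r,
        ((1 / hdens N x) * ∫ t in Set.Ioc (0 : ℝ) x, f t ∂(modelMeasure N)) * deriv ψ x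
          * hdens N x
      = -∫ x in Set.Ioc (0 : ℝ) r, f x * ψ x * hdens N x :=
  stmt8_general N p hN1 hp r f hf ψ hψ hψsupp
end

section
/- Let u ∈ L^p(Ω, m) and f ∈ L^q(Ω, m) with p, q conjugate exponents. Define F(t) = ∫_{{u > t}} (u − t) f dm for t ∈ ℝ. Then F is differentiable outside a countable set C ⊂ ℝ, and F'(t) = −∫_{{u > t}} f dm for every t ∈ ℝ \ C. -/
/-!
On `{u > τ}` the integrand is `(u - τ)⁺ f`, and for each `x` the map `τ ↦ (u x - τ)⁺ f x` is
`|f x|`-Lipschitz and differentiable at `t` with derivative `-𝟙{u x > t} f x` unless `u x = t`.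
Since `u f` and `f` are integrable (Hölder), differentiation under the integral sign gives
`F'(t) = -∫_{u > t} f` whenever `m {u = t} = 0`, and the level sets of positive measure are
disjoint, hence countably many in a finite measure space.
-/

open MeasureTheory Set

lemma lipschitzWith_posPart_const_sub (a : ℝ) : LipschitzWith 1 (fun τ : ℝ => (a - τ)⁺) := by
  simpa [Function.comp_def] using
    lipschitzWith_posPart.comp (IsometryEquiv.subLeft a).isometry.lipschitz

lemma hasDerivAt_posPart_const_sub {a t : ℝ} (h : a ≠ t) :
    HasDerivAt (fun τ : ℝ => (a - τ)⁺) (if t < a then -1 else 0) t := by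
  rcases h.lt_or_gt with hat | hta
  · rw [if_neg hat.not_gt]
    refine (hasDerivAt_const t 0).congr_of_eventuallyEq ?_
    filter_upwards [Ioi_mem_nhds hat] with τ hτ
    exact posPart_eq_zero.2 (sub_nonpos.2 hτ.le)
  · rw [if_pos hta]
    refine ((hasDerivAt_id t).const_sub a).congr_of_eventuallyEq ?_
    filter_upwards [Iio_mem_nhds hta] with τ hτ
    exact posPart_eq_self.2 (sub_nonneg.2 hτ.le)

lemma posPart_sub_mul_eq_indicator {X : Type*} (u f : X → ℝ) (τ : ℝ) :
    (fun x => (u x - τ)⁺ * f x) = {x | τ < u x}.indicator (fun x => (u x - τ) * f x) := by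
  ext x
  by_cases hx : τ < u x
  · simp [hx, posPart_eq_self.2 (sub_nonneg.2 hx.le)]
  · simp [hx, posPart_eq_zero.2 (sub_nonpos.2 (not_lt.1 hx))]

section

variable {X : Type*} [MeasurableSpace X] {m : Measure X} {u f : X → ℝ}

lemma setIntegral_setOf_lt_sub_mul_eq_integral_posPart (hu : AEMeasurable u m) (τ : ℝ) :
    ∫ x in {x | τ < u x}, (u x - τ) * f x ∂m = ∫ x, (u x - τ)⁺ * f x ∂m := by
  rw [posPart_sub_mul_eq_indicator,
    integral_indicator₀ (nullMeasurableSet_lt aemeasurable_const hu)]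

lemma hasDerivAt_integral_posPart_sub_mul (hu : AEMeasurable u m) (hf : Integrable f m)
    (huf : Integrable (fun x => u x * f x) m) {t : ℝ} (ht : m {x | u x = t} = 0) :
    HasDerivAt (fun τ => ∫ x, (u x - τ)⁺ * f x ∂m) (-∫ x in {x | t < u x}, f x ∂m) t := by
  have hs : NullMeasurableSet {x | t < u x} m := nullMeasurableSet_lt aemeasurable_const hu
  have h_meas : ∀ τ, AEStronglyMeasurable (fun x => (u x - τ)⁺ * f x) m := fun τ =>
    (hu.sub_const τ).posPart.aestronglyMeasurable.mul hf.aestronglyMeasurable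
  have h_int : Integrable (fun x => (u x - t)⁺ * f x) m := by
    rw [posPart_sub_mul_eq_indicator]
    exact ((huf.sub (hf.const_mul t)).congr (.of_forall fun x => by simp [sub_mul])).indicator₀ hs
  have h_lip : ∀ x, LipschitzOnWith (Real.nnabs ‖f x‖) (fun τ => (u x - τ)⁺ * f x) univ := by
    intro x
    rw [Real.nnabs_of_nonneg (norm_nonneg _), norm_toNNReal]
    refine LipschitzWith.lipschitzOnWith ?_
    simpa [Function.comp_def, mul_comm] using
      (lipschitzWith_smul (f x)).comp (lipschitzWith_posPart_const_sub (u x))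
  have h_diff : ∀ᵐ x ∂m, HasDerivAt (fun τ => (u x - τ)⁺ * f x)
      (-{x | t < u x}.indicator f x) t := by
    have hne : ∀ᵐ x ∂m, u x ≠ t := by simpa [ae_iff] using ht
    filter_upwards [hne] with x hx
    refine ((hasDerivAt_posPart_const_sub hx).mul_const (f x)).congr_deriv ?_
    by_cases h : t < u x <;> simp [h]
  have h_val : -∫ x in {x | t < u x}, f x ∂m = ∫ x, -{x | t < u x}.indicator f x ∂m := by
    rw [integral_neg, integral_indicator₀ hs]
  rw [h_val]
  exact (hasDerivAt_integral_of_dominated_loc_of_lip Filter.univ_mem (.of_forall h_meas) h_int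
    (hf.aestronglyMeasurable.indicator₀ hs).neg (.of_forall h_lip) hf.norm h_diff).2

end

theorem stmt16_general {X : Type*} [MeasurableSpace X] (m : Measure X) [IsFiniteMeasure m]
    (p q : ℝ) (hp : 1 < p) (hpq : 1 / p + 1 / q = 1)
    (u f : X → ℝ)
    (hu : MemLp u (ENNReal.ofReal p) m) (hf : MemLp f (ENNReal.ofReal q) m) :
    ∃ C : Set ℝ, C.Countable ∧ ∀ t ∉ C,
      HasDerivAt (fun τ => ∫ x in {x | τ < u x}, (u x - τ) * f x ∂m)
        (-∫ x in {x | t < u x}, f x ∂m) t := by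
  have hpq' : p.HolderConjugate q :=
    Real.holderConjugate_iff.mpr ⟨hp, by simpa only [one_div] using hpq⟩
  have := hpq'.ennrealOfReal
  have hfi : Integrable f m := hf.integrable (ENNReal.one_le_ofReal.mpr hpq'.symm.lt.le)
  have hufi : Integrable (fun x => u x * f x) m := hu.integrable_mul hf
  have hum : AEMeasurable u m := hu.aestronglyMeasurable.aemeasurable
  refine ⟨{t | 0 < m {x | u x = t}}, Measure.countable_meas_level_set_pos₀ hum.nullMeasurable,
    fun t ht => ?_⟩
  simp_rw [setIntegral_setOf_lt_sub_mul_eq_integral_posPart hum]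
  exact hasDerivAt_integral_posPart_sub_mul hum hfi hufi (nonpos_iff_eq_zero.mp (not_lt.mp ht))

/-- Differentiability of `F(t) = ∫_{{u > t}} (u − t) f dm` outside a countable set, with
`F'(t) = −∫_{{u > t}} f dm`. -/
theorem stmt16 {X : Type*} [MeasurableSpace X] (m : Measure X) [IsFiniteMeasure m]
    (p q : ℝ) (hp : 1 < p) (hq : 1 < q) (hpq : 1 / p + 1 / q = 1)
    (u f : X → ℝ)
    (hu : MemLp u (ENNReal.ofReal p) m) (hf : MemLp f (ENNReal.ofReal q) m) :
    ∃ C : Set ℝ, C.Countable ∧ ∀ t ∉ C,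
      HasDerivAt (fun τ => ∫ x in {x | τ < u x}, (u x - τ) * f x ∂m)
        (-∫ x in {x | t < u x}, f x ∂m) t :=
  stmt16_general m p q hp hpq u f hu hf
end

section
/- Let f : X → ℝ be Borel, μ(t) := m({|f| > t}), and suppose μ(t₀) < ∞ for some t₀. For a bounded open set B of finite measure, the set N = {t ≥ t₀ : m({|f| = t} ∩ B) > 0} is countable, and the map t ↦ Per({|f| > t}, B) restricted to [t₀, ∞) \ N is lower semi-continuous (hence the full map t ↦ Per({|f| > t}, B) is Borel measurable on [t₀, ∞)). -/
open MeasureTheory Set ENNReal Filter Metric Topology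
open scoped symmDiff

/-!
A finite measure charges at most countably many level sets `{g = t}`. If `{g = t}` is null, then
`{s < g} ∆ {t < g} ⊆ g⁻¹' closedBall t |s - t|` and these preimages shrink to the null set
`{g = t}` as `s → t`, so `s ↦ {s < g}` is continuous at `t` in measure; the lower
semicontinuity of `Per` under this convergence gives lower semicontinuity of
`t ↦ Per {t < |f|}` off the countable set of charged levels, and a function lower semicontinuous
outside a countable set is Borel.
-/

theorem LowerSemicontinuousOn.measurable_of_countable_compl {α γ : Type*} [TopologicalSpace α]
    [MeasurableSpace α] [OpensMeasurableSpace α] [MeasurableSingletonClass α]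
    [TopologicalSpace γ] [MeasurableSpace γ] [BorelSpace γ] [LinearOrder γ] [OrderTopology γ]
    [SecondCountableTopology γ] {f : α → γ} {s : Set α} (hf : LowerSemicontinuousOn f s)
    (hs : sᶜ.Countable) : Measurable f := by
  apply measurable_of_measurable_on_compl_countable _ hs
  rw [compl_compl]
  exact (lowerSemicontinuous_restrict_iff.2 hf).measurable

theorem lowerSemicontinuousAt_of_le_liminf_seq {α γ : Type*} [TopologicalSpace α]
    [FirstCountableTopology α] [CompleteLinearOrder γ] {f : α → γ} {a : α}
    (h : ∀ u : ℕ → α, Tendsto u atTop (𝓝 a) → f a ≤ liminf (f ∘ u) atTop) :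
    LowerSemicontinuousAt f a := by
  intro y hy
  by_contra hnot
  obtain ⟨u, hu, hfu⟩ := exists_seq_forall_of_frequently (not_eventually.1 hnot)
  have : liminf (f ∘ u) atTop ≤ y :=
    liminf_le_of_frequently_le' (Frequently.of_forall fun n => not_lt.1 (hfu n))
  exact hy.not_ge ((h u hu).trans this)

theorem symmDiff_setOf_lt_subset_preimage_closedBall {X : Type*} (g : X → ℝ) (s t : ℝ) :
    {x | s < g x} ∆ {x | t < g x} ⊆ g ⁻¹' closedBall t (dist s t) := by
  rintro x (⟨hs, ht⟩ | ⟨ht, hs⟩) <;>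
    simp only [mem_ofPred_eq, not_lt, mem_preimage, mem_closedBall, Real.dist_eq, abs_le] at * <;>
    constructor <;> linarith [le_abs_self (s - t), neg_abs_le (s - t)]

section LevelSets

variable {X : Type*} [MeasurableSpace X] {g : X → ℝ} {t : ℝ}

theorem countable_setOf_measure_levelSet_inter_pos {m : Measure X} {B : Set X} (hg : Measurable g)
    (hB : m B ≠ ∞) : {t : ℝ | 0 < m ({x | g x = t} ∩ B)}.Countable := by
  have : IsFiniteMeasure (m.restrict B) := isFiniteMeasure_restrict.2 hB
  refine (Measure.countable_meas_level_set_pos (μ := m.restrict B) hg).mono fun t ht => ?_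
  have hmeas : MeasurableSet {x | g x = t} := hg (measurableSet_singleton t)
  show 0 < m.restrict B {x | g x = t}
  rwa [Measure.restrict_apply hmeas]

variable {ν : Measure X} [IsFiniteMeasure ν]

theorem tendsto_measure_preimage_closedBall (hg : Measurable g) (ht : ν (g ⁻¹' {t}) = 0) :
    Tendsto (fun δ => ν (g ⁻¹' closedBall t δ)) (𝓝[≥] 0) (𝓝 0) := by
  rw [← Ioi_insert, nhdsWithin_insert, tendsto_sup]
  refine ⟨by simpa [closedBall_zero, ht] using
    tendsto_pure_nhds (fun δ => ν (g ⁻¹' closedBall t δ)) 0, ?_⟩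
  have := tendsto_measure_biInter_gt (μ := ν) (s := fun δ => g ⁻¹' closedBall t δ) (a := 0)
    (fun _ _ => (hg measurableSet_closedBall).nullMeasurableSet)
    (fun _ _ _ hij => preimage_mono (closedBall_subset_closedBall hij))
    ⟨1, one_pos, measure_ne_top _ _⟩
  rwa [← preimage_iInter₂, biInter_gt_closedBall, closedBall_zero, ht] at this

theorem tendsto_measure_symmDiff_setOf_lt (hg : Measurable g) (ht : ν (g ⁻¹' {t}) = 0)
    {u : ℕ → ℝ} (hu : Tendsto u atTop (𝓝 t)) :
    Tendsto (fun n => ν ({x | u n < g x} ∆ {x | t < g x})) atTop (𝓝 0) := by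
  have hdist : Tendsto (fun n => dist (u n) t) atTop (𝓝[≥] 0) :=
    tendsto_nhdsWithin_iff.2
      ⟨tendsto_iff_dist_tendsto_zero.1 hu, Eventually.of_forall fun _ => dist_nonneg⟩
  exact tendsto_of_tendsto_of_tendsto_of_le_of_le tendsto_const_nhds
    ((tendsto_measure_preimage_closedBall hg ht).comp hdist) (fun _ => zero_le)
    fun n => measure_mono (symmDiff_setOf_lt_subset_preimage_closedBall g (u n) t)

theorem tendsto_measure_inter_symmDiff_setOf_lt {m : Measure X} {B : Set X} (hg : Measurable g)
    (hB : m B ≠ ∞) (ht : m ({x | g x = t} ∩ B) = 0) {u : ℕ → ℝ} (hu : Tendsto u atTop (𝓝 t)) :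
    Tendsto (fun n => m (({x | u n < g x} ∆ {x | t < g x}) ∩ B)) atTop (𝓝 0) := by
  have : IsFiniteMeasure (m.restrict B) := isFiniteMeasure_restrict.2 hB
  have hnull : m.restrict B (g ⁻¹' {t}) = 0 := by
    rwa [Measure.restrict_apply (hg (measurableSet_singleton t))]
  exact tendsto_of_tendsto_of_tendsto_of_le_of_le tendsto_const_nhds
    (tendsto_measure_symmDiff_setOf_lt hg hnull hu) (fun _ => zero_le)
    fun _ => Measure.le_restrict_apply _ _

end LevelSets

theorem stmt17_general {X : Type*} [MeasurableSpace X]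
    (m : Measure X) (f : X → ℝ) (hf : Measurable f)
    (t₀ : ℝ)
    (B : Set X) (hBfin : m B < ⊤)
    (Per : Set X → ℝ≥0∞)
    (hPerLSC : ∀ (E : Set X) (Es : ℕ → Set X),
      Tendsto (fun n => m ((Es n ∆ E) ∩ B)) atTop (nhds 0) →
      Per E ≤ Filter.atTop.liminf fun n => Per (Es n)) :
    {t : ℝ | t₀ ≤ t ∧ 0 < m ({x | |f x| = t} ∩ B)}.Countable ∧
    LowerSemicontinuousOn (fun t => Per {x | t < |f x|})
      (Set.Ici t₀ \ {t : ℝ | t₀ ≤ t ∧ 0 < m ({x | |f x| = t} ∩ B)}) ∧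
    Measurable fun t : Set.Ici t₀ => Per {x | (t : ℝ) < |f x|} := by
  set N := {t : ℝ | t₀ ≤ t ∧ 0 < m ({x | |f x| = t} ∩ B)}
  have hN : N.Countable :=
    (countable_setOf_measure_levelSet_inter_pos hf.abs hBfin.ne).mono fun _ ht => ht.2
  have hLSC : LowerSemicontinuousOn (fun t => Per {x | t < |f x|}) (Ici t₀ \ N) := fun t ht =>
    have hnull : m ({x | |f x| = t} ∩ B) = 0 :=
      nonpos_iff_eq_zero.1 (not_lt.1 fun hpos => ht.2 ⟨ht.1, hpos⟩)
    (lowerSemicontinuousAt_of_le_liminf_seq (f := fun s => Per {x | s < |f x|}) fun _ hu =>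
      hPerLSC _ _ (tendsto_measure_inter_symmDiff_setOf_lt hf.abs hBfin.ne hnull hu))
      |>.lowerSemicontinuousWithinAt _
  refine ⟨hN, hLSC, ?_⟩
  refine (hLSC.comp continuous_subtype_val.continuousOn (t := Subtype.val ⁻¹' Nᶜ)
    fun t ht => ⟨t.2, ht⟩).measurable_of_countable_compl ?_
  rw [preimage_compl, compl_compl]
  exact hN.preimage Subtype.val_injective

/-- Measurability of `t ↦ Per({|f| > t}, B)`. The perimeter `Per(·, B)` is abstracted as a
functional on sets which is lower semi-continuous under `L¹(B)` convergence of indicator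
functions. Conclusions: the exceptional set `N = {t ≥ t₀ : m({|f| = t} ∩ B) > 0}` is countable,
`t ↦ Per({|f| > t}, B)` is lower semi-continuous on `[t₀, ∞) \ N`, and it is Borel measurable on
`[t₀, ∞)`. -/
theorem stmt17 {X : Type*} [MetricSpace X] [MeasurableSpace X] [BorelSpace X]
    (m : Measure X) (f : X → ℝ) (hf : Measurable f)
    (t₀ : ℝ) (hμt₀ : m {x | t₀ < |f x|} < ⊤)
    (B : Set X) (hBopen : IsOpen B) (hBbd : Bornology.IsBounded B) (hBfin : m B < ⊤)
    (Per : Set X → ℝ≥0∞)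
    (hPerLSC : ∀ (E : Set X) (Es : ℕ → Set X),
      Tendsto (fun n => m ((Es n ∆ E) ∩ B)) atTop (nhds 0) →
      Per E ≤ Filter.atTop.liminf fun n => Per (Es n)) :
    {t : ℝ | t₀ ≤ t ∧ 0 < m ({x | |f x| = t} ∩ B)}.Countable ∧
    LowerSemicontinuousOn (fun t => Per {x | t < |f x|})
      (Set.Ici t₀ \ {t : ℝ | t₀ ≤ t ∧ 0 < m ({x | |f x| = t} ∩ B)}) ∧
    Measurable fun t : Set.Ici t₀ => Per {x | (t : ℝ) < |f x|} :=
  stmt17_general m f hf t₀ B hBfin Per hPerLSC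
end

section
/- Let f : X → [0, ∞) be Borel with superlevel sets of finite perimeter in a bounded open set B, and fix s ≥ 0, n, h ∈ ℕ₊. Choose t_{j,h} ∈ ((j−1)/h + s, j/h + s) with (1/h) Per({f > t_{j,h}}, B) ≤ ∫_{(j−1)/h+s}^{j/h+s} Per({f > t}, B) dt, and set f_{n,h} = s + (1/h) Σ_{j=1}^{nh} χ_{{f > t_{j,h}}}. Then ∫_B |f ∧ (n+s) ∨ s − f_{n,h}| dm ≤ m(B)/h; in particular f_{n,h} → f ∧ (n+s) ∨ s in L¹(B) as h → ∞. -/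
open MeasureTheory Set ENNReal Filter

lemma cardaux (m k : ℕ) (hk : k ≤ m) :
    (Finset.univ.filter (fun j : Fin m => (j : ℕ) < k)).card = k := by
  have : (Finset.univ.filter (fun j : Fin m => (j : ℕ) < k))
      = Finset.map (Fin.castLEEmb hk) Finset.univ := by
    ext j
    simp only [Finset.mem_filter, Finset.mem_univ, true_and, Finset.mem_map, Fin.castLEEmb_apply]
    constructor
    · intro hj; exact ⟨⟨j, hj⟩, by simp [Fin.ext_iff]⟩
    · rintro ⟨a, rfl⟩; simp [a.2]
  rw [this]; simp

lemma keyptwise (s y : ℝ) (n h : ℕ) (hn : 0 < n) (hh : 0 < h)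
    (t : Fin (n * h) → ℝ)
    (ht : ∀ j : Fin (n * h),
      t j ∈ Set.Ioo ((j : ℝ) / h + s) (((j : ℝ) + 1) / h + s)) :
    |min (max y s) ((n : ℝ) + s)
      - (s + (1 / (h : ℝ)) * ∑ j : Fin (n * h), if t j < y then (1 : ℝ) else 0)|
      ≤ 1 / h := by
  have hpos : (0 : ℝ) < h := by exact_mod_cast hh
  have hnpos : (0 : ℝ) < n := by exact_mod_cast hn
  set N : ℕ := (Finset.univ.filter fun j : Fin (n * h) => t j < y).card with hN
  have hsum : (∑ j : Fin (n * h), if t j < y then (1 : ℝ) else 0) = N := by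
    rw [hN, Finset.sum_boole]
  rw [hsum]
  by_cases hy : y < s
  · have hN0 : N = 0 := by
      rw [hN, Finset.card_eq_zero, Finset.filter_eq_empty_iff]
      intro j _
      have := (ht j).1
      have : s ≤ t j := by
        have hj : (0:ℝ) ≤ (j:ℝ)/h := by positivity
        linarith
      push_neg
      linarith
    rw [hN0]
    have h1 : max y s = s := max_eq_right hy.le
    have h2 : min s ((n:ℝ) + s) = s := min_eq_left (by linarith)
    rw [h1, h2]
    simp
  · push_neg at hy
    have h1 : max y s = y := max_eq_left hy
    set g : ℝ := min (y - s) n with hg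
    have hgy : g ≤ y - s := min_le_left _ _
    have hgn : g ≤ n := min_le_right _ _
    have hg0 : 0 ≤ g := le_min (by linarith) hnpos.le
    have h2 : min y ((n:ℝ) + s) = g + s := by
      rw [hg, ← min_add_add_right]
      ring_nf
    rw [h1, h2]
    -- upper bound on N
    have hceil : (⌈h * g⌉₊ : ℕ) ≤ n * h := by
      apply Nat.ceil_le.mpr
      push_cast
      nlinarith
    have hub : (N : ℝ) ≤ h * g + 1 := by
      have hsub : (Finset.univ.filter fun j : Fin (n * h) => t j < y)
          ⊆ (Finset.univ.filter fun j : Fin (n * h) => (j : ℕ) < ⌈h * g⌉₊) := by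
        intro j hj
        simp only [Finset.mem_filter, Finset.mem_univ, true_and] at hj ⊢
        have hlt : (j : ℝ) / h + s < y := lt_trans (ht j).1 hj
        have hjlt : (j : ℝ) < h * (y - s) := by
          rw [div_add' _ _ _ hpos.ne'] at hlt
          have := (div_lt_iff₀ hpos).mp hlt
          nlinarith
        have hjnh : (j : ℝ) < (n : ℝ) * h := by exact_mod_cast j.2
        have : (j : ℝ) < h * g := by
          rcases min_cases (y - s) (n : ℝ) with ⟨he, _⟩ | ⟨he, _⟩ <;> rw [hg, he] <;> nlinarith
        exact Nat.lt_ceil.mpr this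
      have := Finset.card_le_card hsub
      rw [cardaux _ _ hceil] at this
      have h3 : (N : ℝ) ≤ (⌈h * g⌉₊ : ℝ) := by exact_mod_cast this
      have h4 : (⌈h * g⌉₊ : ℝ) < h * g + 1 := Nat.ceil_lt_add_one (by positivity)
      linarith
    -- lower bound on N
    have hlb : h * g - 1 ≤ (N : ℝ) := by
      have hsub : (Finset.univ.filter fun j : Fin (n * h) => (j : ℕ) < ⌊h * g⌋₊)
          ⊆ (Finset.univ.filter fun j : Fin (n * h) => t j < y) := by
        intro j hj
        simp only [Finset.mem_filter, Finset.mem_univ, true_and] at hj ⊢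
        have hj1 : (j : ℕ) + 1 ≤ ⌊h * g⌋₊ := hj
        have hj2 : ((j : ℕ) : ℝ) + 1 ≤ h * g := by
          have := Nat.floor_le (by positivity : (0:ℝ) ≤ h * g)
          have h5 : ((j : ℕ) + 1 : ℝ) ≤ (⌊h * g⌋₊ : ℝ) := by exact_mod_cast hj1
          linarith
        have : t j < ((j : ℝ) + 1) / h + s := (ht j).2
        have h6 : ((j : ℝ) + 1) / h ≤ g := by
          rw [div_le_iff₀ hpos]; nlinarith
        calc t j < ((j : ℝ) + 1) / h + s := (ht j).2
          _ ≤ g + s := by linarith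
          _ ≤ y := by linarith
      have hflnh : (⌊h * g⌋₊ : ℕ) ≤ n * h := by
        apply Nat.floor_le_of_le
        push_cast; nlinarith
      have := Finset.card_le_card hsub
      rw [cardaux _ _ hflnh] at this
      have h3 : (⌊h * g⌋₊ : ℝ) ≤ (N : ℝ) := by exact_mod_cast this
      have h4 : h * g - 1 < (⌊h * g⌋₊ : ℝ) := Nat.sub_one_lt_floor _
      linarith
    -- conclude
    have he : g + s - (s + 1 / (h:ℝ) * N) = (h * g - N) / h := by
      field_simp; ring
    rw [he, abs_div, abs_of_pos hpos]
    gcongr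
    rw [abs_le]
    constructor <;> linarith

/-- Discretization step of the coarea inequality: with
`f_{n,h} = s + (1/h) Σ_{j=1}^{nh} χ_{{f > t_{j,h}}}` and
`t_{j,h} ∈ ((j−1)/h + s, j/h + s)` chosen so that
`(1/h) Per({f > t_{j,h}}, B) ≤ ∫_{(j−1)/h+s}^{j/h+s} Per({f > t}, B) dt`, one has
`∫_B |f ∧ (n+s) ∨ s − f_{n,h}| dm ≤ m(B)/h`. -/
theorem stmt18 {X : Type*} [MetricSpace X] [MeasurableSpace X] [BorelSpace X]
    (m : Measure X) (f : X → ℝ) (hf : Measurable f) (hf0 : ∀ x, 0 ≤ f x)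
    (B : Set X) (hBopen : IsOpen B) (hBbd : Bornology.IsBounded B) (hBfin : m B < ⊤)
    (Per : Set X → ℝ≥0∞)
    (s : ℝ) (hs : 0 ≤ s) (n h : ℕ) (hn : 0 < n) (hh : 0 < h)
    (t : Fin (n * h) → ℝ)
    (ht : ∀ j : Fin (n * h),
      t j ∈ Set.Ioo ((j : ℝ) / h + s) (((j : ℝ) + 1) / h + s))
    (htPer : ∀ j : Fin (n * h),
      Per {x | t j < f x} / (h : ℝ≥0∞)
        ≤ ∫⁻ τ in Set.Ioo ((j : ℝ) / h + s) (((j : ℝ) + 1) / h + s),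
            Per {x | τ < f x}) :
    ∫⁻ x in B, ENNReal.ofReal
        |min (max (f x) s) ((n : ℝ) + s)
          - (s + (1 / (h : ℝ)) * ∑ j : Fin (n * h), if t j < f x then (1 : ℝ) else 0)| ∂m
      ≤ m B / (h : ℝ≥0∞) := by
  have hpos : (0 : ℝ) < h := by exact_mod_cast hh
  calc ∫⁻ x in B, ENNReal.ofReal
        |min (max (f x) s) ((n : ℝ) + s)
          - (s + (1 / (h : ℝ)) * ∑ j : Fin (n * h), if t j < f x then (1 : ℝ) else 0)| ∂m
      ≤ ∫⁻ _ in B, ENNReal.ofReal (1 / (h : ℝ)) ∂m := by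
        apply lintegral_mono
        intro x
        exact ENNReal.ofReal_le_ofReal (keyptwise s (f x) n h hn hh t ht)
    _ = ENNReal.ofReal (1 / (h : ℝ)) * m B := setLIntegral_const B _
    _ = m B / (h : ℝ≥0∞) := by
        rw [one_div, ENNReal.ofReal_inv_of_pos hpos, ENNReal.ofReal_natCast,
          ENNReal.div_eq_inv_mul]
end
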